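/- Fix an integer n ≥ 2 and natural numbers w and m. The set of n-ary operator monomials of weight w and multiplicity m is finite, and its cardinality N_n(w,m) satisfies (w+1)·N_n(w,m) = C(w+1, m+1) · C(w + (w−m)(n−2) + 1, m), where C(·,·) denotes the binomial coefficient. -/

import Mathlib

/-!
A monomial is encoded by the rows of its products listed in preorder: the top-level atom list and
the atom list inside each `L(…)`, every atom recorded as `true` iff it is an `L`. A monomial of
weight `w` and multiplicity `m` becomes the preorder code of a plane tree with `m + 1` nodes whose
rows have lengths `1 + (n-1)aᵢ` with `∑ aᵢ = w - m` and contain `m` entries `true` in total.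
By the cycle lemma exactly one of the `m + 1` rotations of any such row sequence is a tree code,
so `(m + 1) N_n(w,m)` counts all these sequences; choosing the `aᵢ` and then the positions of the
`true`s (Vandermonde) gives `C(w, m) · C(m + 1 + (n-1)(w-m), m)`, which rearranges to the formula.
-/

mutual
/-- An atom of an `n`-ary operator monomial: either the indeterminate symbol `∗`
or `L(M)` for an operator monomial `M`. -/
inductive OpAtom (n : ℕ) : Type
  | star : OpAtom n
  | op : OpMon n → OpAtom n

/-- A vector of `k` atoms. -/
inductive OpAtomVec (n : ℕ) : ℕ → Type
  | nil : OpAtomVec n 0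
  | cons : {k : ℕ} → OpAtom n → OpAtomVec n k → OpAtomVec n (k + 1)

/-- An `n`-ary operator monomial (in flattened normal form with respect to `n`-ary
associativity): a nonempty list of atoms whose length is congruent to `1` modulo `n-1`. -/
inductive OpMon (n : ℕ) : Type
  | mk : (k : ℕ) → 1 ≤ k → k % (n - 1) = 1 % (n - 1) → OpAtomVec n k → OpMon n
end

mutual
/-- Weight (total number of operations) of an atom. -/
def OpAtom.weight {n : ℕ} : OpAtom n → ℕ
  | .star => 0
  | .op m => 1 + m.weight

/-- Sum of the weights of a vector of atoms. -/
def OpAtomVec.weight {n : ℕ} : {k : ℕ} → OpAtomVec n k → ℕ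
  | _, .nil => 0
  | _, .cons a v => a.weight + v.weight

/-- Weight of an operator monomial `[A_1, …, A_k]`: the number `(k-1)/(n-1)` of `n`-ary
products needed to form a product of `k` factors, plus the weights of the atoms. -/
def OpMon.weight {n : ℕ} : OpMon n → ℕ
  | .mk k _ _ v => (k - 1) / (n - 1) + v.weight
end

mutual
/-- Multiplicity (number of occurrences of the operator symbol `L`) of an atom. -/
def OpAtom.mult {n : ℕ} : OpAtom n → ℕ
  | .star => 0
  | .op m => 1 + m.mult

/-- Total multiplicity of a vector of atoms. -/
def OpAtomVec.mult {n : ℕ} : {k : ℕ} → OpAtomVec n k → ℕ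
  | _, .nil => 0
  | _, .cons a v => a.mult + v.mult

/-- Multiplicity of an operator monomial. -/
def OpMon.mult {n : ℕ} : OpMon n → ℕ
  | .mk _ _ _ v => v.mult
end

mutual
/-- Degree (number of occurrences of the indeterminate `∗`) of an atom. -/
def OpAtom.degree {n : ℕ} : OpAtom n → ℕ
  | .star => 1
  | .op m => m.degree

/-- Total degree of a vector of atoms. -/
def OpAtomVec.degree {n : ℕ} : {k : ℕ} → OpAtomVec n k → ℕ
  | _, .nil => 0
  | _, .cons a v => a.degree + v.degree

/-- Degree of an operator monomial. -/
def OpMon.degree {n : ℕ} : OpMon n → ℕ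
  | .mk _ _ _ v => v.degree
end

namespace List

variable {M : Type*} [AddCommMonoid M]

theorem sum_take_rotate_add_sum_take {l : List M} {i k : ℕ} (h : i + k ≤ l.length) :
    ((l.rotate i).take k).sum + (l.take i).sum = (l.take (i + k)).sum := by
  rw [rotate_eq_drop_append_take (by omega), take_append_of_le_length (by simp; omega), take_add,
    sum_append, add_comm]

theorem sum_take_rotate_add_sum_take_of_length_le {l : List M} {i k : ℕ} (hi : i ≤ l.length)
    (hk : k ≤ l.length) (h : l.length ≤ i + k) :
    ((l.rotate i).take k).sum + (l.take i).sum = l.sum + (l.take (i + k - l.length)).sum := by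
  rw [rotate_eq_drop_append_take hi, take_append, take_of_length_le (by simp; omega), take_take,
    length_drop, min_eq_left (by omega), show k - (l.length - i) = i + k - l.length by omega,
    sum_append, ← sum_take_add_sum_drop l i]
  abel

theorem forall_sum_take_rotate_nonneg_iff {l : List ℤ} (hl : l.sum = -1) {i : ℕ}
    (hi : i < l.length) :
    (∀ k < l.length, 0 ≤ ((l.rotate i).take k).sum) ↔
      ∀ k < l.length, (l.take i).sum ≤ (l.take k).sum ∧
        (k < i → (l.take i).sum < (l.take k).sum) := by
  constructor
  · intro h k hk
    rcases le_or_gt i k with hik | hki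
    · have e := sum_take_rotate_add_sum_take (l := l) (i := i) (k := k - i) (by omega)
      rw [Nat.add_sub_cancel' hik] at e
      have := h (k - i) (by omega)
      exact ⟨by linarith, fun h => absurd h (by omega)⟩
    · have e := sum_take_rotate_add_sum_take_of_length_le (k := k + l.length - i) hi.le
        (by omega) (by omega)
      rw [show i + (k + l.length - i) - l.length = k by omega, hl] at e
      have := h (k + l.length - i) (by omega)
      exact ⟨by linarith, fun _ => by linarith⟩
  · intro h k hk
    rcases lt_or_ge (i + k) l.length with hik | hik
    · have e := sum_take_rotate_add_sum_take hik.le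
      have := (h (i + k) hik).1
      linarith
    · have e := sum_take_rotate_add_sum_take_of_length_le hi.le hk.le hik
      have := (h (i + k - l.length) (by omega)).2 (by omega)
      rw [hl] at e
      linarith

/-- The cycle lemma of Dvoretzky and Motzkin. -/
theorem existsUnique_rotate_sum_take_nonneg {l : List ℤ} (hl : l.sum = -1) :
    ∃! i, i < l.length ∧ ∀ k < l.length, 0 ≤ ((l.rotate i).take k).sum := by
  refine (existsUnique_congr fun i =>
    and_congr_right (forall_sum_take_rotate_nonneg_iff hl)).2 ?_
  set P : ℕ → ℤ := fun k => (l.take k).sum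
  -- the good rotation starts at the first minimum of the prefix sums
  have hlen : 0 < l.length := length_pos_iff.2 (by rintro rfl; simp at hl)
  obtain ⟨b, hb, hbmin⟩ := Finset.exists_min_image (Finset.range l.length) P ⟨0, by simpa⟩
  have hex : ∃ i, i < l.length ∧ P i = P b := ⟨b, Finset.mem_range.1 hb, rfl⟩
  obtain ⟨hfind, hfindP⟩ := Nat.find_spec hex
  have hgood : ∀ k < l.length,
      P (Nat.find hex) ≤ P k ∧ (k < Nat.find hex → P (Nat.find hex) < P k) := by
    intro k hk
    have hle : P (Nat.find hex) ≤ P k := by rw [hfindP]; exact hbmin k (Finset.mem_range.2 hk)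
    exact ⟨hle, fun hki =>
      hle.lt_of_ne fun h => Nat.find_min hex hki ⟨hk, h.symm.trans hfindP⟩⟩
  refine ⟨Nat.find hex, ⟨hfind, hgood⟩, fun j ⟨hj, hPj⟩ => le_antisymm ?_ ?_⟩
  · exact not_lt.1 fun h => ((hPj _ hfind).2 h).not_ge (hgood j hj).1
  · exact not_lt.1 fun h => ((hgood j hj).2 h).not_ge (hPj _ hfind).1

theorem rotate_rotate_neg {α : Type*} {l : List α} {m : ℕ} (hl : l.length = m + 1)
    (i : Fin (m + 1)) : (l.rotate i).rotate ↑(-i) = l := by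
  rw [rotate_rotate, ← rotate_mod, hl, ← Fin.val_add, add_neg_cancel, Fin.val_zero,
    rotate_zero]

theorem count_true_ofFn {k : ℕ} (f : Fin k → Bool) :
    (List.ofFn f).count true = (Finset.univ.filter fun i => f i = true).card := by
  induction k with
  | zero => simp
  | succ k ih =>
    rw [ofFn_succ, count_cons, ih, Finset.card_filter, Finset.card_filter,
      Fin.sum_univ_succ]
    cases f 0 <;> simp [add_comm]

def boolEquivFinset (k t : ℕ) :
    {r : List Bool | r.length = k ∧ r.count true = t} ≃ {s : Finset (Fin k) // s.card = t} where
  toFun r := ⟨Finset.univ.filter fun i => r.1[i.1]'(i.2.trans_eq r.2.1.symm) = true, by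
    obtain ⟨r, rfl, rfl⟩ := r
    rw [← count_true_ofFn, ofFn_getElem]⟩
  invFun s := ⟨List.ofFn fun i => decide (i ∈ s.1), by simp, by
    rw [count_true_ofFn]
    simpa using s.2⟩
  left_inv r := Subtype.ext (ext_getElem (by simp [r.2.1]) fun i _ _ => by simp)
  right_inv s := Subtype.ext (by ext i; simp)

theorem card_bool_length_count_true (k t : ℕ) :
    Nat.card {r : List Bool | r.length = k ∧ r.count true = t} = k.choose t := by
  rw [Nat.card_congr (boolEquivFinset k t), Nat.card_eq_fintype_card, Fintype.card_finset_len,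
    Fintype.card_fin]

end List

namespace RowCode

open Finset

def IsNaryRow (n : ℕ) (r : List Bool) : Prop :=
  1 ≤ r.length ∧ r.length % (n - 1) = 1 % (n - 1)

def rowProducts (n : ℕ) (r : List Bool) : ℕ := (r.length - 1) / (n - 1)

theorem IsNaryRow.length_eq {n : ℕ} {r : List Bool} (h : IsNaryRow n r) :
    r.length = 1 + (n - 1) * rowProducts n r := by
  have := Nat.div_add_mod (r.length - 1) (n - 1)
  rw [Nat.sub_mod_eq_zero_of_mod_eq h.2, add_zero] at this
  rw [rowProducts, this]
  have := h.1
  omega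

theorem isNaryRow_and_rowProducts_eq_iff {n : ℕ} (hn : 2 ≤ n) {r : List Bool} {a : ℕ} :
    IsNaryRow n r ∧ rowProducts n r = a ↔ r.length = 1 + (n - 1) * a := by
  refine ⟨fun ⟨hr, ha⟩ => ha ▸ hr.length_eq, fun h => ⟨⟨by omega, ?_⟩, ?_⟩⟩
  · rw [h, Nat.add_mul_mod_self_left]
  · rw [rowProducts, h, Nat.add_sub_cancel_left, Nat.mul_div_cancel_left a (by omega)]

def childCount (c : List (List Bool)) : ℕ := (c.map (List.count true)).sum

def productCount (n : ℕ) (c : List (List Bool)) : ℕ := (c.map (rowProducts n)).sum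

@[simp] theorem childCount_nil : childCount [] = 0 := rfl

@[simp] theorem childCount_cons (r : List Bool) (c : List (List Bool)) :
    childCount (r :: c) = r.count true + childCount c := List.sum_cons

@[simp] theorem childCount_rotate (c : List (List Bool)) (i : ℕ) :
    childCount (c.rotate i) = childCount c :=
  ((c.rotate_perm i).map _).sum_eq

@[simp] theorem productCount_nil (n : ℕ) : productCount n [] = 0 := rfl

@[simp] theorem productCount_cons (n : ℕ) (r : List Bool) (c : List (List Bool)) :
    productCount n (r :: c) = rowProducts n r + productCount n c := List.sum_cons

@[simp] theorem productCount_append (n : ℕ) (c c' : List (List Bool)) :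
    productCount n (c ++ c') = productCount n c + productCount n c' := by
  simp [productCount]

@[simp] theorem productCount_rotate (n : ℕ) (c : List (List Bool)) (i : ℕ) :
    productCount n (c.rotate i) = productCount n c :=
  ((c.rotate_perm i).map _).sum_eq

/-- `IsForestCode n j c`: `c` lists, in preorder, the rows of a forest of `j` plane trees in which
a node with row `r` has one child per `true` entry of `r`. -/
inductive IsForestCode (n : ℕ) : ℕ → List (List Bool) → Prop
  | nil : IsForestCode n 0 []
  | cons {r : List Bool} {c : List (List Bool)} {j : ℕ} :
      IsNaryRow n r → IsForestCode n (r.count true + j) c → IsForestCode n (j + 1) (r :: c)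

theorem IsForestCode.isNaryRow {n j : ℕ} {c : List (List Bool)} (h : IsForestCode n j c) :
    ∀ r ∈ c, IsNaryRow n r := by
  induction h with
  | nil => simp
  | cons hr _ ih => exact List.forall_mem_cons.2 ⟨hr, ih⟩

theorem IsForestCode.length_eq {n j : ℕ} {c : List (List Bool)} (h : IsForestCode n j c) :
    c.length = childCount c + j := by
  induction h with
  | nil => rfl
  | cons _ _ ih => simp only [List.length_cons, childCount_cons, ih]; omega

/-- The stack increments of a preorder code: reading a row pops its node and pushes its
children. -/
def excess (c : List (List Bool)) : List ℤ := c.map fun r => (r.count true : ℤ) - 1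

theorem isForestCode_iff {n : ℕ} {j : ℕ} {c : List (List Bool)} :
    IsForestCode n j c ↔ (∀ r ∈ c, IsNaryRow n r) ∧ (excess c).sum = -j ∧
      ∀ k < c.length, -(j : ℤ) < ((excess c).take k).sum := by
  induction c generalizing j with
  | nil =>
    refine ⟨fun h => by cases h; simp [excess], fun ⟨_, h, _⟩ => ?_⟩
    obtain rfl : j = 0 := by simp [excess] at h; omega
    exact .nil
  | cons r c ih =>
    simp only [excess, List.map_cons, List.sum_cons, List.forall_mem_cons, List.length_cons]
      at ih ⊢
    constructor
    · rintro (_ | ⟨hr, hc⟩)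
      obtain ⟨hrows, hsum, hprefix⟩ := ih.1 hc
      refine ⟨⟨hr, hrows⟩, by push_cast at hsum ⊢; omega, fun k hk => ?_⟩
      cases k with
      | zero => simp; omega
      | succ k =>
        have := hprefix k (by omega)
        simp only [List.take_succ_cons, List.sum_cons]
        push_cast at this ⊢
        omega
    · rintro ⟨⟨hr, hrows⟩, hsum, hprefix⟩
      have hj : 0 < j := by simpa using hprefix 0 (by omega)
      obtain ⟨j, rfl⟩ : ∃ j', j = j' + 1 := ⟨j - 1, by omega⟩
      refine .cons hr (ih.2 ⟨hrows, by push_cast at hsum ⊢; omega, fun k hk => ?_⟩)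
      have := hprefix (k + 1) (by omega)
      simp only [List.take_succ_cons, List.sum_cons] at this
      push_cast at this ⊢
      omega

theorem sum_excess (c : List (List Bool)) : (excess c).sum = childCount c - c.length := by
  induction c with
  | nil => simp [excess]
  | cons r c ih =>
    simp only [excess, List.map_cons, List.sum_cons, childCount_cons, List.length_cons] at ih ⊢
    rw [ih]
    push_cast
    ring

theorem existsUnique_rotate_isForestCode {n : ℕ} {c : List (List Bool)}
    (hc : ∀ r ∈ c, IsNaryRow n r) (hcount : childCount c + 1 = c.length) :
    ∃! i, i < c.length ∧ IsForestCode n 1 (c.rotate i) := by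
  have hsum : (excess c).sum = -1 := by rw [sum_excess]; omega
  have key : ∀ i, IsForestCode n 1 (c.rotate i) ↔
      ∀ k < (excess c).length, 0 ≤ (((excess c).rotate i).take k).sum := by
    intro i
    rw [isForestCode_iff, excess, List.map_rotate, ← excess, ((excess c).rotate_perm i).sum_eq,
      hsum, List.length_rotate]
    simp only [excess, List.length_map, Nat.cast_one, Int.reduceNeg, true_and,
      (c.rotate_perm i).mem_iff, and_iff_right hc, Int.lt_iff_add_one_le, Int.reduceAdd]
  simpa only [key, excess, List.length_map] using List.existsUnique_rotate_sum_take_nonneg hsum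

def naryRows (n a t : ℕ) : Set (List Bool) :=
  {r | IsNaryRow n r ∧ rowProducts n r = a ∧ r.count true = t}

theorem naryRows_eq {n : ℕ} (hn : 2 ≤ n) (a t : ℕ) :
    naryRows n a t = {r : List Bool | r.length = 1 + (n - 1) * a ∧ r.count true = t} := by
  ext r
  simp only [naryRows, Set.mem_ofPred_eq, ← and_assoc, isNaryRow_and_rowProducts_eq_iff hn]

theorem card_naryRows {n : ℕ} (hn : 2 ≤ n) (a t : ℕ) :
    Nat.card (naryRows n a t) = (1 + (n - 1) * a).choose t := by
  rw [naryRows_eq hn, List.card_bool_length_count_true]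

instance (n a t : ℕ) : Finite (naryRows n a t) :=
  Set.Finite.to_subtype <| (List.finite_length_eq Bool (1 + (n - 1) * a)).subset
    fun _ ⟨hr, ha, _⟩ => ha ▸ hr.length_eq

def rowSeqs (n q s p : ℕ) : Set (List (List Bool)) :=
  {c | c.length = q ∧ (∀ r ∈ c, IsNaryRow n r) ∧ childCount c = s ∧ productCount n c = p}

def consRowSeq (n q s p : ℕ)
    (x : (i : antidiagonal s × antidiagonal p) ×
      (naryRows n i.2.1.1 i.1.1.1 × rowSeqs n q i.1.1.2 i.2.1.2)) :
    rowSeqs n (q + 1) s p :=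
  ⟨x.2.1.1 :: x.2.2.1, by
    obtain ⟨hr, har, htr⟩ := x.2.1.2
    obtain ⟨hc, hrows, hs, hp⟩ := x.2.2.2
    have hts := mem_antidiagonal.1 x.1.1.2
    have hap := mem_antidiagonal.1 x.1.2.2
    exact ⟨by simp [hc], List.forall_mem_cons.2 ⟨hr, hrows⟩, by simp [htr, hs, hts],
      by simp [har, hp, hap]⟩⟩

theorem consRowSeq_bijective (n q s p : ℕ) : Function.Bijective (consRowSeq n q s p) := by
  constructor
  · rintro ⟨⟨i, j⟩, ⟨r, hr⟩, ⟨c, hc⟩⟩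
      ⟨⟨i', j'⟩, ⟨r', hr'⟩, ⟨c', hc'⟩⟩ h
    obtain ⟨rfl, rfl⟩ := List.cons_eq_cons.1 (congrArg Subtype.val h)
    obtain rfl : i = i' :=
      Subtype.ext (Prod.ext (hr.2.2.symm.trans hr'.2.2) (hc.2.2.1.symm.trans hc'.2.2.1))
    obtain rfl : j = j' :=
      Subtype.ext (Prod.ext (hr.2.1.symm.trans hr'.2.1) (hc.2.2.2.symm.trans hc'.2.2.2))
    rfl
  · rintro ⟨_ | ⟨r, c⟩, hlen, hrows, hs, hp⟩
    · simp at hlen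
    · rw [List.forall_mem_cons] at hrows
      simp only [childCount_cons, productCount_cons] at hs hp
      exact ⟨⟨(⟨(r.count true, childCount c), by simp [hs]⟩,
        ⟨(rowProducts n r, productCount n c), by simp [hp]⟩),
        ⟨r, hrows.1, rfl, rfl⟩, ⟨c, by simpa using hlen, hrows.2, rfl, rfl⟩⟩, rfl⟩

instance finite_rowSeqs (n : ℕ) : ∀ q s p : ℕ, Finite (rowSeqs n q s p)
  | 0, _, _ => Finite.Set.subset {[]} fun _ hc => List.length_eq_zero_iff.1 hc.1
  | q + 1, s, p =>
    have := finite_rowSeqs n q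
    Finite.of_surjective _ (consRowSeq_bijective n q s p).2

theorem sum_antidiagonal_multichoose (q p : ℕ) :
    ∑ j ∈ antidiagonal p, q.multichoose j.2 = (q + 1).multichoose p := by
  rw [← Nat.sum_antidiagonal_swap]
  simp only [Prod.snd_swap]
  rw [Nat.sum_antidiagonal_eq_sum_range_succ fun k _ => q.multichoose k, Nat.sum_range_multichoose,
    Nat.multichoose_eq, show q + 1 + p - 1 = p + q by omega, Nat.choose_symm_add]

theorem sum_antidiagonal_choose_mul_multichoose (c q s p : ℕ) :
    ∑ i ∈ antidiagonal s, ∑ j ∈ antidiagonal p,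
        (1 + c * j.1).choose i.1 * (q.multichoose j.2 * (q + c * j.2).choose i.2) =
      (q + 1).multichoose p * (q + 1 + c * p).choose s := by
  rw [sum_comm, ← sum_antidiagonal_multichoose, sum_mul]
  refine sum_congr rfl fun j hj => ?_
  rw [HasAntidiagonal.mem_antidiagonal] at hj
  rw [show q + 1 + c * p = (1 + c * j.1) + (q + c * j.2) by rw [← hj]; ring, Nat.add_choose_eq,
    mul_sum]
  refine sum_congr rfl fun i _ => by ring

theorem rowSeqs_zero (n s p : ℕ) :
    rowSeqs n 0 s p = if s = 0 ∧ p = 0 then {[]} else ∅ := by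
  ext c
  split_ifs with h
  · obtain ⟨rfl, rfl⟩ := h
    simp +contextual [rowSeqs, List.length_eq_zero_iff]
  · simp only [Set.mem_empty_iff_false, iff_false]
    rintro ⟨hc, -, rfl, rfl⟩
    obtain rfl := List.length_eq_zero_iff.1 hc
    simp at h

theorem card_rowSeqs {n : ℕ} (hn : 2 ≤ n) :
    ∀ q s p, Nat.card (rowSeqs n q s p) = q.multichoose p * (q + (n - 1) * p).choose s
  | 0, s, p => by
    rw [rowSeqs_zero]
    split_ifs with h
    · obtain ⟨rfl, rfl⟩ := h
      simp
    · rcases p with _ | p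
      · simp [Nat.choose_eq_zero_of_lt (Nat.pos_of_ne_zero fun hs => h ⟨hs, rfl⟩)]
      · simp
  | q + 1, s, p => by
    rw [← Nat.card_congr (Equiv.ofBijective _ (consRowSeq_bijective n q s p)), Nat.card_sigma,
      Fintype.sum_prod_type]
    simp only [Nat.card_prod, card_naryRows hn, card_rowSeqs hn q]
    rw [← sum_antidiagonal_choose_mul_multichoose, ← sum_coe_sort (antidiagonal s)]
    refine sum_congr rfl fun i _ => ?_
    rw [← sum_coe_sort (antidiagonal p)]

def treeCodes (n m p : ℕ) : Set (List (List Bool)) :=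
  {c | IsForestCode n 1 c ∧ c.length = m + 1 ∧ productCount n c = p}

theorem rotate_mem_rowSeqs {n m p : ℕ} {c : List (List Bool)} (hc : c ∈ treeCodes n m p)
    (i : ℕ) : c.rotate i ∈ rowSeqs n (m + 1) m p := by
  obtain ⟨hc, hlen, hp⟩ := hc
  have := hc.length_eq
  exact ⟨by simp [hlen], fun r hr => hc.isNaryRow r ((c.rotate_perm i).mem_iff.1 hr),
    by simp; omega, by simp [hp]⟩

def rotateTreeCode (n m p : ℕ) (x : treeCodes n m p × Fin (m + 1)) : rowSeqs n (m + 1) m p :=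
  ⟨x.1.1.rotate x.2, rotate_mem_rowSeqs x.1.2 x.2⟩

theorem rotateTreeCode_bijective (n m p : ℕ) : Function.Bijective (rotateTreeCode n m p) := by
  constructor
  · rintro ⟨⟨c, hc⟩, i⟩ ⟨⟨c', hc'⟩, i'⟩ h
    have hrot : c.rotate i = c'.rotate i' := congrArg Subtype.val h
    have hc_eq := List.rotate_rotate_neg hc.2.1 i
    have hc'_eq := List.rotate_rotate_neg hc'.2.1 i'
    rw [← hrot] at hc'_eq
    obtain ⟨hlen, hrows, hcount, -⟩ := rotate_mem_rowSeqs hc i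
    have hii : -i = -i' := Fin.ext <| (existsUnique_rotate_isForestCode hrows (by omega)).unique
      ⟨hlen.symm ▸ (-i).2, by rw [hc_eq]; exact hc.1⟩
      ⟨hlen.symm ▸ (-i').2, by rw [hc'_eq]; exact hc'.1⟩
    obtain rfl := neg_inj.1 hii
    obtain rfl : c = c' := hc_eq.symm.trans hc'_eq
    rfl
  · rintro ⟨d, hlen, hrows, hs, hp⟩
    obtain ⟨j, ⟨hj, hgood⟩, -⟩ := existsUnique_rotate_isForestCode hrows (by omega)
    refine ⟨(⟨d.rotate j, hgood, by simp [hlen], by simp [hp]⟩, -⟨j, by omega⟩), ?_⟩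
    exact Subtype.ext (List.rotate_rotate_neg hlen ⟨j, by omega⟩)

end RowCode

open RowCode

def OpAtom.isOp {n : ℕ} : OpAtom n → Bool
  | .star => false
  | .op _ => true

def OpAtomVec.row {n : ℕ} : {k : ℕ} → OpAtomVec n k → List Bool
  | _, .nil => []
  | _, .cons a v => a.isOp :: v.row

@[simp] theorem OpAtomVec.length_row {n : ℕ} : ∀ {k : ℕ} (v : OpAtomVec n k), v.row.length = k
  | _, .nil => rfl
  | _, .cons _ v => congrArg (· + 1) v.length_row

mutual
def OpAtom.code {n : ℕ} : OpAtom n → List (List Bool)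
  | .star => []
  | .op M => M.code

def OpAtomVec.code {n : ℕ} : {k : ℕ} → OpAtomVec n k → List (List Bool)
  | _, .nil => []
  | _, .cons a v => a.code ++ v.code

def OpMon.code {n : ℕ} : OpMon n → List (List Bool)
  | .mk _ _ _ v => v.row :: v.code
end

mutual
theorem OpAtom.length_code {n : ℕ} : ∀ a : OpAtom n, a.code.length = a.mult
  | .star => rfl
  | .op M => by rw [OpAtom.code, OpAtom.mult, M.length_code, add_comm]

theorem OpAtomVec.length_code {n : ℕ} :
    ∀ {k : ℕ} (v : OpAtomVec n k), v.code.length = v.mult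
  | _, .nil => rfl
  | _, .cons a v => by
    rw [OpAtomVec.code, OpAtomVec.mult, List.length_append, a.length_code, v.length_code]

theorem OpMon.length_code {n : ℕ} : ∀ M : OpMon n, M.code.length = M.mult + 1
  | .mk _ _ _ v => by rw [OpMon.code, OpMon.mult, List.length_cons, v.length_code]
end

mutual
theorem OpAtom.productCount_code_add_mult {n : ℕ} :
    ∀ a : OpAtom n, productCount n a.code + a.mult = a.weight
  | .star => rfl
  | .op M => by
    rw [OpAtom.code, OpAtom.mult, OpAtom.weight, ← M.productCount_code_add_mult]
    ring

theorem OpAtomVec.productCount_code_add_mult {n : ℕ} :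
    ∀ {k : ℕ} (v : OpAtomVec n k), productCount n v.code + v.mult = v.weight
  | _, .nil => rfl
  | _, .cons a v => by
    rw [OpAtomVec.code, OpAtomVec.mult, OpAtomVec.weight, productCount_append,
      ← a.productCount_code_add_mult, ← v.productCount_code_add_mult]
    ring

theorem OpMon.productCount_code_add_mult {n : ℕ} :
    ∀ M : OpMon n, productCount n M.code + M.mult = M.weight
  | .mk _ _ _ v => by
    rw [OpMon.code, OpMon.mult, OpMon.weight, productCount_cons, rowProducts, v.length_row,
      ← v.productCount_code_add_mult]
    ring
end

theorem OpMon.mult_le_weight {n : ℕ} (M : OpMon n) : M.mult ≤ M.weight :=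
  M.productCount_code_add_mult ▸ Nat.le_add_left _ _

mutual
theorem OpAtom.isForestCode_code_append {n : ℕ} :
    ∀ (a : OpAtom n) {j : ℕ} {c : List (List Bool)},
      IsForestCode n j c → IsForestCode n (a.isOp.toNat + j) (a.code ++ c)
  | .star, _, _, h => by simpa [OpAtom.code, OpAtom.isOp] using h
  | .op M, _, _, h => by
    simpa [OpAtom.code, OpAtom.isOp, add_comm] using M.isForestCode_code_append h

theorem OpAtomVec.isForestCode_code_append {n : ℕ} :
    ∀ {k : ℕ} (v : OpAtomVec n k) {j : ℕ} {c : List (List Bool)},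
      IsForestCode n j c → IsForestCode n (v.row.count true + j) (v.code ++ c)
  | _, .nil, _, _, h => by simpa [OpAtomVec.code, OpAtomVec.row] using h
  | _, .cons a v, _, _, h => by
    rw [OpAtomVec.code, OpAtomVec.row, List.append_assoc]
    convert a.isForestCode_code_append (v.isForestCode_code_append h) using 1
    cases a.isOp <;> simp; omega

theorem OpMon.isForestCode_code_append {n : ℕ} :
    ∀ (M : OpMon n) {j : ℕ} {c : List (List Bool)},
      IsForestCode n j c → IsForestCode n (j + 1) (M.code ++ c)
  | .mk k hk hmod v, _, _, h =>
    .cons ⟨by rwa [v.length_row], by rwa [v.length_row]⟩ (v.isForestCode_code_append h)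
end

theorem OpMon.isForestCode_code {n : ℕ} (M : OpMon n) : IsForestCode n 1 M.code := by
  simpa using M.isForestCode_code_append IsForestCode.nil

mutual
theorem OpAtom.eq_of_code_append_eq {n : ℕ} :
    ∀ {a a' : OpAtom n} {l l' : List (List Bool)}, a.isOp = a'.isOp →
      a.code ++ l = a'.code ++ l' → a = a' ∧ l = l'
  | .star, .star, _, _, _, h => ⟨rfl, h⟩
  | .op _, .op _, _, _, _, h => by
    obtain ⟨rfl, rfl⟩ := OpMon.eq_of_code_append_eq h
    exact ⟨rfl, rfl⟩

theorem OpAtomVec.eq_of_code_append_eq {n : ℕ} :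
    ∀ {k : ℕ} {v v' : OpAtomVec n k} {l l' : List (List Bool)}, v.row = v'.row →
      v.code ++ l = v'.code ++ l' → v = v' ∧ l = l'
  | _, .nil, .nil, _, _, _, h => ⟨rfl, h⟩
  | _, .cons a v, .cons a' v', _, _, hrow, h => by
    obtain ⟨hop, hvrow⟩ := List.cons_eq_cons.1 hrow
    rw [OpAtomVec.code, OpAtomVec.code, List.append_assoc, List.append_assoc] at h
    obtain ⟨rfl, hv⟩ := OpAtom.eq_of_code_append_eq hop h
    obtain ⟨rfl, rfl⟩ := OpAtomVec.eq_of_code_append_eq hvrow hv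
    exact ⟨rfl, rfl⟩

theorem OpMon.eq_of_code_append_eq {n : ℕ} :
    ∀ {M M' : OpMon n} {l l' : List (List Bool)},
      M.code ++ l = M'.code ++ l' → M = M' ∧ l = l'
  | .mk k _ _ v, .mk k' _ _ v', _, _, h => by
    obtain ⟨hrow, h⟩ := List.cons_eq_cons.1 h
    obtain rfl : k = k' := by rw [← v.length_row, ← v'.length_row, hrow]
    obtain ⟨rfl, rfl⟩ := OpAtomVec.eq_of_code_append_eq hrow h
    exact ⟨rfl, rfl⟩
end

def OpAtomVec.ofRow {n : ℕ} : (r : List Bool) → List (OpMon n) → OpAtomVec n r.length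
  | [], _ => .nil
  | false :: r, Ms => .cons .star (ofRow r Ms)
  | true :: r, [] => .cons .star (ofRow r [])
  | true :: r, M :: Ms => .cons (.op M) (ofRow r Ms)

theorem OpAtomVec.row_ofRow {n : ℕ} : ∀ (r : List Bool) (Ms : List (OpMon n)),
    Ms.length = r.count true → (ofRow r Ms).row = r
  | [], _, _ => rfl
  | false :: r, Ms, h => by
    rw [ofRow, row, row_ofRow r Ms (by simpa using h)]
    rfl
  | true :: r, [], h => by simp at h
  | true :: r, M :: Ms, h => by
    rw [ofRow, row, row_ofRow r Ms (by simpa using h)]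
    rfl

theorem OpAtomVec.code_ofRow {n : ℕ} : ∀ (r : List Bool) (Ms : List (OpMon n)),
    Ms.length = r.count true → (ofRow r Ms).code = Ms.flatMap OpMon.code
  | [], [], _ => rfl
  | [], _ :: _, h => by simp at h
  | false :: r, Ms, h => by
    rw [ofRow, code, code_ofRow r Ms (by simpa using h)]
    rfl
  | true :: r, [], h => by simp at h
  | true :: r, M :: Ms, h => by
    rw [ofRow, code, code_ofRow r Ms (by simpa using h), List.flatMap_cons]
    rfl

theorem RowCode.IsForestCode.exists_flatMap_code_eq {n j : ℕ} {c : List (List Bool)}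
    (h : IsForestCode n j c) :
    ∃ Ms : List (OpMon n), Ms.length = j ∧ Ms.flatMap OpMon.code = c := by
  induction h with
  | nil => exact ⟨[], rfl, rfl⟩
  | @cons r c j hr _ ih =>
    obtain ⟨Ms, hlen, rfl⟩ := ih
    have htake : (Ms.take (r.count true)).length = r.count true := by simp; omega
    refine ⟨.mk r.length hr.1 hr.2 (.ofRow r (Ms.take (r.count true))) :: Ms.drop (r.count true),
      by simp; omega, ?_⟩
    rw [List.flatMap_cons, OpMon.code, OpAtomVec.row_ofRow _ _ htake,
      OpAtomVec.code_ofRow _ _ htake, List.cons_append, ← List.flatMap_append,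
      List.take_append_drop]

def OpMon.toTreeCode {n w m : ℕ} (hmw : m ≤ w)
    (M : {M : OpMon n | M.weight = w ∧ M.mult = m}) : treeCodes n m (w - m) :=
  ⟨M.1.code, M.1.isForestCode_code, by rw [M.1.length_code, M.2.2], by
    obtain ⟨hw, hm⟩ := M.2
    have := M.1.productCount_code_add_mult
    omega⟩

theorem OpMon.toTreeCode_bijective {n w m : ℕ} (hmw : m ≤ w) :
    Function.Bijective (toTreeCode (n := n) hmw) := by
  constructor
  · intro M M' h
    have hcode : M.1.code ++ [] = M'.1.code ++ [] := by
      rw [List.append_nil, List.append_nil]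
      exact congrArg Subtype.val h
    exact Subtype.ext (eq_of_code_append_eq hcode).1
  · rintro ⟨c, hc, hlen, hp⟩
    obtain ⟨Ms, hMs, rfl⟩ := hc.exists_flatMap_code_eq
    obtain ⟨M, rfl⟩ := List.length_eq_one_iff.1 hMs
    simp only [List.flatMap_cons, List.flatMap_nil, List.append_nil] at hlen hp
    have hmult : M.mult = m := by have := M.length_code; omega
    have hweight : M.weight = w := by have := M.productCount_code_add_mult; omega
    exact ⟨⟨M, hweight, hmult⟩, Subtype.ext (by simp [toTreeCode])⟩

theorem OpMon.finite_and_card_mul_add_one {n : ℕ} (hn : 2 ≤ n) {w m : ℕ} (hmw : m ≤ w) :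
    Finite {M : OpMon n | M.weight = w ∧ M.mult = m} ∧
      Nat.card {M : OpMon n | M.weight = w ∧ M.mult = m} * (m + 1) =
        w.choose m * (m + 1 + (n - 1) * (w - m)).choose m := by
  have eM := Equiv.ofBijective _ (OpMon.toTreeCode_bijective (n := n) hmw)
  have eR := Equiv.ofBijective _ (rotateTreeCode_bijective n m (w - m))
  have : Finite (treeCodes n m (w - m) × Fin (m + 1)) := Finite.of_equiv _ eR.symm
  have : Finite (treeCodes n m (w - m)) := Finite.prod_left (Fin (m + 1))
  refine ⟨Finite.of_equiv _ eM.symm, ?_⟩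
  have hR := Nat.card_congr eR
  rw [Nat.card_prod, Nat.card_fin] at hR
  rw [Nat.card_congr eM, hR, card_rowSeqs hn, Nat.multichoose_eq,
    show m + 1 + (w - m) - 1 = w by omega, Nat.choose_symm_of_eq_add (show w = w - m + m by omega)]

/-- For `n ≥ 2`, the set of `n`-ary operator monomials of weight `w` and multiplicity
`m` is finite, and its cardinality `N_n(w,m)` satisfies
`(w+1) · N_n(w,m) = C(w+1, m+1) · C(w + (w-m)(n-2) + 1, m)`. -/
theorem stmt_11 (n : ℕ) (hn : 2 ≤ n) (w m : ℕ) :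
    {M : OpMon n | M.weight = w ∧ M.mult = m}.Finite ∧
    (w + 1) * Nat.card {M : OpMon n | M.weight = w ∧ M.mult = m} =
      Nat.choose (w + 1) (m + 1) * Nat.choose (w + (w - m) * (n - 2) + 1) m := by
  rcases lt_or_ge w m with hwm | hmw
  · have hempty : {M : OpMon n | M.weight = w ∧ M.mult = m} = ∅ :=
      Set.eq_empty_of_forall_notMem fun M ⟨hw, hm⟩ => by have := M.mult_le_weight; omega
    simp [hempty, Nat.choose_eq_zero_of_lt (by omega : w + 1 < m + 1)]
  obtain ⟨hfin, hcard⟩ := OpMon.finite_and_card_mul_add_one hn hmw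
  refine ⟨Set.toFinite _, Nat.eq_of_mul_eq_mul_right (by omega : 0 < m + 1) ?_⟩
  have hrow : m + 1 + (n - 1) * (w - m) = w + (w - m) * (n - 2) + 1 := by
    obtain ⟨d, rfl⟩ := Nat.exists_eq_add_of_le hmw
    obtain ⟨k, rfl⟩ := Nat.exists_eq_add_of_le' hn
    simp only [Nat.add_sub_cancel_left, Nat.add_sub_cancel, show k + 2 - 1 = k + 1 by omega]
    ring
  calc (w + 1) * Nat.card {M : OpMon n | M.weight = w ∧ M.mult = m} * (m + 1)
      = (w + 1) * w.choose m * (m + 1 + (n - 1) * (w - m)).choose m := by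
        rw [mul_assoc, hcard, mul_assoc]
    _ = _ := by rw [Nat.add_one_mul_choose_eq, hrow]; ring
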